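/- Let f be a primitive positive definite integral ternary quadratic form that is stable and odd-regular, and let n be a positive odd integer that is represented by f over ℤ₂. If n is not represented by f over ℤ, then there exists an odd prime p dividing n such that f is anisotropic over ℤ_p. -/

import Mathlib

/-- Value of the integral ternary quadratic form with coefficient vector `c`
(`c 0`, `c 1`, `c 2` the diagonal coefficients; `c 3`, `c 4`, `c 5` the cross
coefficients of `x₀x₁`, `x₀x₂`, `x₁x₂`) on a vector over a commutative ring. -/
def TEval {R : Type*} [CommRing R] (c : Fin 6 → ℤ) (x : Fin 3 → R) : R :=
  (c 0 : R) * x 0 ^ 2 + (c 1 : R) * x 1 ^ 2 + (c 2 : R) * x 2 ^ 2 +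
    (c 3 : R) * x 0 * x 1 + (c 4 : R) * x 0 * x 2 + (c 5 : R) * x 1 * x 2

/-- `n` is represented by the form over `ℤ_p`. -/
def TReprAt (p : ℕ) (hp : p.Prime) (c : Fin 6 → ℤ) (n : ℤ) : Prop :=
  letI : Fact p.Prime := ⟨hp⟩
  ∃ x : Fin 3 → ℤ_[p], TEval c x = (n : ℤ_[p])

/-- The form is odd-regular. -/
def TOddRegular (c : Fin 6 → ℤ) : Prop :=
  ∀ n : ℤ, 0 < n → Odd n → (∀ (p : ℕ) (hp : p.Prime), TReprAt p hp c n) →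
    ∃ x : Fin 3 → ℤ, TEval c x = n

/-- The form is `p`-stable for the odd prime `p`.  In condition (i), the vanishing of the
polar bilinear form `B(u,v)` is expressed by `f(u+v) = f(u) + f(v)`. -/
def TPStable (p : ℕ) (hp : p.Prime) (c : Fin 6 → ℤ) : Prop :=
  letI : Fact p.Prime := ⟨hp⟩
  (∃ u v : Fin 3 → ℤ_[p], TEval c u = 1 ∧ TEval c v = -1 ∧
    TEval c (u + v) = TEval c u + TEval c v) ∨
  (∃ Δ ε : ℤ_[p], IsUnit Δ ∧ (¬ ∃ t : ℤ_[p], t ^ 2 = Δ) ∧ IsUnit ε ∧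
    ∃ U : Matrix (Fin 3) (Fin 3) ℤ_[p], IsUnit U.det ∧
      ∀ x : Fin 3 → ℤ_[p],
        TEval c (U.mulVec x) = x 0 ^ 2 - Δ * x 1 ^ 2 + (p : ℤ_[p]) * ε * x 2 ^ 2)

/-- The form is anisotropic over `ℤ_p`. -/
def TAnisotropicAt (p : ℕ) (hp : p.Prime) (c : Fin 6 → ℤ) : Prop :=
  letI : Fact p.Prime := ⟨hp⟩
  ∀ x : Fin 3 → ℤ_[p], TEval c x = 0 → x = 0

open PadicInt Polynomial

section Aux
variable {p : ℕ} [hfp : Fact p.Prime]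

lemma aux_toZMod_eq_zero_iff (x : ℤ_[p]) :
    PadicInt.toZMod x = 0 ↔ (p : ℤ_[p]) ∣ x := by
  rw [← RingHom.mem_ker, PadicInt.ker_toZMod, PadicInt.maximalIdeal_eq_span_p,
    Ideal.mem_span_singleton]

lemma aux_unit_two (hp2 : p ≠ 2) : IsUnit (2 : ℤ_[p]) := by
  rw [PadicInt.isUnit_iff]
  have h1 : ¬ ‖((2 : ℤ) : ℤ_[p])‖ < 1 := by
    rw [PadicInt.norm_int_lt_one_iff_dvd]
    intro h
    have := (Nat.prime_dvd_prime_iff_eq hfp.out Nat.prime_two).mp (by exact_mod_cast h)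
    exact hp2 this
  have h2 : ‖((2 : ℤ) : ℤ_[p])‖ ≤ 1 := PadicInt.norm_le_one _
  push_cast at h1 h2
  linarith

lemma aux_unit_of_toZMod_ne_zero {x : ℤ_[p]} (h : PadicInt.toZMod x ≠ 0) : IsUnit x := by
  rw [PadicInt.isUnit_iff]
  have h1 : ¬ ‖x‖ < 1 := by
    rw [PadicInt.norm_lt_one_iff_dvd, ← aux_toZMod_eq_zero_iff]
    exact h
  have h2 := x.2
  simp only [PadicInt.norm_def] at *
  linarith

lemma aux_sq_lift (hp2 : p ≠ 2) (w a : ℤ_[p]) (ha : IsUnit a)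
    (hd : (p : ℤ_[p]) ∣ (a ^ 2 - w)) : ∃ x : ℤ_[p], x ^ 2 = w := by
  set F : Polynomial ℤ_[p] := X ^ 2 - C w with hF
  have heva : F.eval a = a ^ 2 - w := by simp [hF]
  have hderiva : F.derivative.eval a = 2 * a := by
    simp [hF]
    norm_num
  have hunit : IsUnit (2 * a) := (aux_unit_two hp2).mul ha
  have hnorm : ‖F.eval a‖ < ‖F.derivative.eval a‖ ^ 2 := by
    rw [heva, hderiva, PadicInt.isUnit_iff.mp hunit, one_pow]
    rw [PadicInt.norm_lt_one_iff_dvd]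
    exact hd
  obtain ⟨z, hz, -⟩ := hensels_lemma hnorm
  refine ⟨z, ?_⟩
  have h : z ^ 2 - w = 0 := by simpa [hF] using hz
  linear_combination h


lemma aux_lift_spec (s : ZMod p) : PadicInt.toZMod ((s.val : ℕ) : ℤ_[p]) = s := by
  rw [map_natCast, ZMod.natCast_val, ZMod.cast_id]

lemma aux_sqrt_of_residue (hp2 : p ≠ 2) (w : ℤ_[p]) (s : ZMod p) (hs : s ≠ 0)
    (hsq : s ^ 2 = PadicInt.toZMod w) : ∃ x : ℤ_[p], x ^ 2 = w := by
  set a : ℤ_[p] := ((s.val : ℕ) : ℤ_[p]) with ha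
  have hta : PadicInt.toZMod a = s := aux_lift_spec s
  have hua : IsUnit a := aux_unit_of_toZMod_ne_zero (by rw [hta]; exact hs)
  refine aux_sq_lift hp2 w a hua ?_
  rw [← aux_toZMod_eq_zero_iff]
  rw [map_sub, map_pow, hta, hsq, sub_self]

/-- every unit is represented by x² - Δy² when Δ is a unit and p is odd. -/
lemma aux_unit_repr (hp2 : p ≠ 2) (Δ u : ℤ_[p]) (hΔ : IsUnit Δ) (hu : IsUnit u) :
    ∃ x y : ℤ_[p], x ^ 2 - Δ * y ^ 2 = u := by
  have hpodd : Fintype.card (ZMod p) % 2 = 1 := by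
    rw [ZMod.card]
    exact Nat.odd_iff.mp (hfp.out.odd_of_ne_two hp2)
  set Δ' : ZMod p := PadicInt.toZMod Δ with hΔ'
  set u' : ZMod p := PadicInt.toZMod u with hu'
  have hΔ'0 : Δ' ≠ 0 := (hΔ.map PadicInt.toZMod).ne_zero
  have hu'0 : u' ≠ 0 := (hu.map PadicInt.toZMod).ne_zero
  -- solve a² - Δ'b² = u' in ZMod p
  obtain ⟨a, b, hab⟩ := FiniteField.exists_root_sum_quadratic
    (f := (X ^ 2 : (ZMod p)[X])) (g := C (-Δ') * X ^ 2 + C 0 * X + C (-u'))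
    (Polynomial.degree_X_pow 2) (Polynomial.degree_quadratic (neg_ne_zero.mpr hΔ'0)) hpodd
  have hab' : a ^ 2 - Δ' * b ^ 2 = u' := by
    simp only [Polynomial.eval_add, Polynomial.eval_mul, Polynomial.eval_pow,
      Polynomial.eval_X, Polynomial.eval_C] at hab
    linear_combination hab
  by_cases hb : a = 0
  · -- then -Δ'b² = u', b ≠ 0; solve Δy² = -u
    have hb0 : b ≠ 0 := by
      intro h
      rw [hb, h] at hab'
      simp at hab'
      exact hu'0 hab'.symm
    obtain ⟨Δi, hΔi⟩ := hΔ.exists_right_inv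
    have hw : b ^ 2 = PadicInt.toZMod (-u * Δi) := by
      have h1 : Δ' * PadicInt.toZMod Δi = 1 := by
        rw [hΔ', ← map_mul, hΔi, map_one]
      have hA : - (Δ' * b ^ 2) = u' := by rw [← hab', hb]; ring
      rw [map_mul, map_neg, ← hu']
      linear_combination (- PadicInt.toZMod Δi) * hA - b ^ 2 * h1
    obtain ⟨y, hy⟩ := aux_sqrt_of_residue hp2 (-u * Δi) b hb0 hw
    refine ⟨0, y, ?_⟩
    have : Δ * y ^ 2 = Δ * (-u * Δi) := by rw [hy]
    rw [show Δ * (-u * Δi) = -u * (Δ * Δi) by ring, hΔi, mul_one] at this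
    rw [this]
    ring
  · -- a ≠ 0; solve x² = u + Δ y₀²
    set y0 : ℤ_[p] := ((b.val : ℕ) : ℤ_[p]) with hy0
    have hty0 : PadicInt.toZMod y0 = b := aux_lift_spec b
    have hw : a ^ 2 = PadicInt.toZMod (u + Δ * y0 ^ 2) := by
      rw [map_add, map_mul, map_pow, hty0, ← hu', ← hΔ']
      linear_combination hab'
    obtain ⟨x, hx⟩ := aux_sqrt_of_residue hp2 (u + Δ * y0 ^ 2) a hb hw
    exact ⟨x, y0, by rw [hx]; ring⟩



lemma aux_zero_of_all_pow_dvd (x : ℤ_[p]) (h : ∀ k : ℕ, (p : ℤ_[p]) ^ k ∣ x) : x = 0 := by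
  by_contra hx
  have hnx : 0 < ‖x‖ := norm_pos_iff.mpr hx
  have hp1 : (1 : ℝ) < (p : ℝ) := by exact_mod_cast hfp.out.one_lt
  obtain ⟨k, hk⟩ := exists_pow_lt_of_lt_one hnx (by
    rw [inv_lt_one_iff₀]; right; exact hp1 : (p : ℝ)⁻¹ < 1)
  have hle : ‖x‖ ≤ (p : ℝ) ^ (-(k : ℤ)) := by
    rw [PadicInt.norm_le_pow_iff_mem_span_pow, Ideal.mem_span_singleton]
    exact h k
  rw [zpow_neg, zpow_natCast, ← inv_pow] at hle
  linarith

lemma aux_descent_step (hp2 : p ≠ 2) (Δ ε : ℤ_[p]) (hΔ : IsUnit Δ)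
    (hns : ¬ ∃ t : ℤ_[p], t ^ 2 = Δ) (hε : IsUnit ε) (a b d : ℤ_[p])
    (heq : a ^ 2 - Δ * b ^ 2 + (p : ℤ_[p]) * ε * d ^ 2 = 0) :
    (p : ℤ_[p]) ∣ a ∧ (p : ℤ_[p]) ∣ b ∧ (p : ℤ_[p]) ∣ d := by
  have htp : PadicInt.toZMod ((p : ℤ_[p])) = 0 := by
    rw [show ((p : ℤ_[p])) = ((p : ℕ) : ℤ_[p]) by norm_cast, map_natCast, ZMod.natCast_self]
  have hmod : (PadicInt.toZMod a) ^ 2 = (PadicInt.toZMod Δ) * (PadicInt.toZMod b) ^ 2 := by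
    have := congrArg PadicInt.toZMod heq
    simp only [map_add, map_sub, map_mul, map_pow, map_zero, htp, zero_mul, mul_zero] at this
    linear_combination this
  have hb : PadicInt.toZMod b = 0 := by
    by_contra hb0
    apply hns
    refine aux_sqrt_of_residue hp2 Δ (PadicInt.toZMod a * (PadicInt.toZMod b)⁻¹) ?_ ?_
    · intro h0
      rcases mul_eq_zero.mp h0 with h | h
      · rw [h] at hmod
        have : (PadicInt.toZMod Δ) * (PadicInt.toZMod b) ^ 2 = 0 := by
          rw [← hmod]; ring
        rcases mul_eq_zero.mp this with h' | h'
        · exact (hΔ.map PadicInt.toZMod).ne_zero h'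
        · exact hb0 ((pow_eq_zero_iff (n := 2) (by norm_num)).mp h')
      · exact hb0 (inv_eq_zero.mp h)
    · field_simp
      linear_combination hmod
  have ha : PadicInt.toZMod a = 0 := by
    rw [hb] at hmod
    simpa using hmod
  have hpa : (p : ℤ_[p]) ∣ a := (aux_toZMod_eq_zero_iff a).mp ha
  have hpb : (p : ℤ_[p]) ∣ b := (aux_toZMod_eq_zero_iff b).mp hb
  refine ⟨hpa, hpb, ?_⟩
  obtain ⟨a', ha'⟩ := hpa
  obtain ⟨b', hb'⟩ := hpb
  have hkey : (p : ℤ_[p]) * ((p : ℤ_[p]) * (a' ^ 2 - Δ * b' ^ 2) + ε * d ^ 2) = 0 := by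
    rw [ha', hb'] at heq
    linear_combination heq
  have hpne : (p : ℤ_[p]) ≠ 0 := PadicInt.prime_p.ne_zero
  have hinner : (p : ℤ_[p]) * (a' ^ 2 - Δ * b' ^ 2) + ε * d ^ 2 = 0 :=
    (mul_eq_zero.mp hkey).resolve_left hpne
  have hdvd : (p : ℤ_[p]) ∣ ε * d ^ 2 := ⟨-(a' ^ 2 - Δ * b' ^ 2), by linear_combination hinner⟩
  have hdvd2 : (p : ℤ_[p]) ∣ d ^ 2 := by
    rcases PadicInt.prime_p.dvd_mul.mp hdvd with h | h
    · exact absurd ((aux_toZMod_eq_zero_iff ε).mpr h) (hε.map PadicInt.toZMod).ne_zero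
    · exact h
  exact PadicInt.prime_p.dvd_of_dvd_pow hdvd2

lemma aux_descent (hp2 : p ≠ 2) (Δ ε : ℤ_[p]) (hΔ : IsUnit Δ)
    (hns : ¬ ∃ t : ℤ_[p], t ^ 2 = Δ) (hε : IsUnit ε) (x y z : ℤ_[p])
    (heq : x ^ 2 - Δ * y ^ 2 + (p : ℤ_[p]) * ε * z ^ 2 = 0) :
    x = 0 ∧ y = 0 ∧ z = 0 := by
  have key : ∀ k : ℕ, ∀ a b d : ℤ_[p],
      a ^ 2 - Δ * b ^ 2 + (p : ℤ_[p]) * ε * d ^ 2 = 0 →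
      (p : ℤ_[p]) ^ k ∣ a ∧ (p : ℤ_[p]) ^ k ∣ b ∧ (p : ℤ_[p]) ^ k ∣ d := by
    intro k
    induction k with
    | zero => intro a b d _; simp
    | succ k ih =>
      intro a b d heq
      obtain ⟨hpa, hpb, hpd⟩ := aux_descent_step hp2 Δ ε hΔ hns hε a b d heq
      obtain ⟨a', ha'⟩ := hpa
      obtain ⟨b', hb'⟩ := hpb
      obtain ⟨d', hd'⟩ := hpd
      have hpne2 : ((p : ℤ_[p])) ^ 2 ≠ 0 := pow_ne_zero _ PadicInt.prime_p.ne_zero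
      have heq' : a' ^ 2 - Δ * b' ^ 2 + (p : ℤ_[p]) * ε * d' ^ 2 = 0 := by
        have h2 : ((p : ℤ_[p])) ^ 2 * (a' ^ 2 - Δ * b' ^ 2 + (p : ℤ_[p]) * ε * d' ^ 2) = 0 := by
          rw [ha', hb', hd'] at heq
          linear_combination heq
        exact (mul_eq_zero.mp h2).resolve_left hpne2
      obtain ⟨h1, h2, h3⟩ := ih a' b' d' heq'
      exact ⟨by rw [ha', pow_succ, mul_comm ((p:ℤ_[p])^k)]; exact mul_dvd_mul_left _ h1,
        by rw [hb', pow_succ, mul_comm ((p:ℤ_[p])^k)]; exact mul_dvd_mul_left _ h2,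
        by rw [hd', pow_succ, mul_comm ((p:ℤ_[p])^k)]; exact mul_dvd_mul_left _ h3⟩
  refine ⟨aux_zero_of_all_pow_dvd x (fun k => (key k x y z heq).1),
    aux_zero_of_all_pow_dvd y (fun k => (key k x y z heq).2.1),
    aux_zero_of_all_pow_dvd z (fun k => (key k x y z heq).2.2)⟩

end Aux

section Main
variable {p : ℕ} [hfp : Fact p.Prime]

lemma teval_comb {R : Type*} [CommRing R] (c : Fin 6 → ℤ) (a b : R) (u v : Fin 3 → R) :
    TEval c (fun i => a * u i + b * v i) =
      a ^ 2 * TEval c u + b ^ 2 * TEval c v +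
        a * b * (TEval c (u + v) - (TEval c u + TEval c v)) := by
  simp only [TEval, Pi.add_apply]
  ring

end Main

theorem stmt10 (c : Fin 6 → ℤ)
    (hpos : ∀ x : Fin 3 → ℚ, x ≠ 0 → 0 < TEval c x)
    (hprim : Int.gcd (c 0) (Int.gcd (c 1) (Int.gcd (c 2)
      (Int.gcd (c 3) (Int.gcd (c 4) (c 5))))) = 1)
    (hstable : ∀ (p : ℕ) (hp : p.Prime), p ≠ 2 → TPStable p hp c)
    (hreg : TOddRegular c)
    (n : ℤ) (hn : 0 < n) (hodd : Odd n)
    (h2 : TReprAt 2 Nat.prime_two c n)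
    (hnot : ¬ ∃ x : Fin 3 → ℤ, TEval c x = n) :
    ∃ (p : ℕ) (hp : p.Prime), p ≠ 2 ∧ (p : ℤ) ∣ n ∧ TAnisotropicAt p hp c := by
  have hall : ¬ ∀ (p : ℕ) (hp : p.Prime), TReprAt p hp c n := fun h => hnot (hreg n hn hodd h)
  push_neg at hall
  obtain ⟨p, hp, hnp⟩ := hall
  have hp2 : p ≠ 2 := by
    rintro rfl
    exact hnp h2
  haveI : Fact p.Prime := ⟨hp⟩
  refine ⟨p, hp, hp2, ?_⟩
  rcases hstable p hp hp2 with ⟨u, v, hu, hv, huv⟩ | ⟨Δ, ε, hΔ, hns, hε, U, hUdet, hU⟩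
  · -- case (i): contradiction, n is always represented
    exfalso
    apply hnp
    obtain ⟨t, ht⟩ := (aux_unit_two (p := p) hp2).exists_right_inv
    refine ⟨fun i => (t * ((n : ℤ_[p]) + 1)) * u i + (t * ((n : ℤ_[p]) - 1)) * v i, ?_⟩
    rw [teval_comb, huv, hu, hv]
    have h4 : (2 : ℤ_[p]) * t = 1 := ht
    linear_combination ((n:ℤ_[p]) * (2 * t + 1)) * h4
  · -- case (ii)
    have hpn : (p : ℤ) ∣ n := by
      by_contra hpn
      apply hnp
      have hun : IsUnit ((n : ℤ) : ℤ_[p]) := by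
        rw [PadicInt.isUnit_iff]
        have h1 : ¬ ‖((n : ℤ) : ℤ_[p])‖ < 1 := by
          rw [PadicInt.norm_int_lt_one_iff_dvd]; exact hpn
        have h2' : ‖((n : ℤ) : ℤ_[p])‖ ≤ 1 := PadicInt.norm_le_one _
        linarith
      obtain ⟨x, y, hxy⟩ := aux_unit_repr hp2 Δ ((n : ℤ) : ℤ_[p]) hΔ hun
      refine ⟨U.mulVec ![x, y, 0], ?_⟩
      rw [hU ![x, y, 0]]
      simp only [Matrix.cons_val_zero, Matrix.cons_val_one, Matrix.head_cons,
        Matrix.cons_val_two, Matrix.tail_cons]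
      rw [← hxy]
      push_cast
      ring
    refine ⟨hpn, ?_⟩
    intro w hw
    haveI := U.invertibleOfIsUnitDet hUdet
    set y : Fin 3 → ℤ_[p] := (⅟U).mulVec w with hy
    have hwy : U.mulVec y = w := by
      rw [hy, Matrix.mulVec_mulVec, mul_invOf_self, Matrix.one_mulVec]
    have heq : y 0 ^ 2 - Δ * y 1 ^ 2 + (p : ℤ_[p]) * ε * y 2 ^ 2 = 0 := by
      rw [← hU y, hwy, hw]
    obtain ⟨h0, h1, h2'⟩ := aux_descent hp2 Δ ε hΔ hns hε (y 0) (y 1) (y 2) heq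
    have hy0 : y = 0 := by
      funext i
      fin_cases i <;> assumption
    rw [← hwy, hy0, Matrix.mulVec_zero]
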